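/- Define ω(θ, ρ, p) := 3π/2 − arctan((ρ cos θ + p sin θ)/(ρ sin θ − p cos θ)) and the Lagrangian L(θ, ρ, p) := γ(ω(θ, ρ, p))·√(ρ² + p²), where γ : ℝ → ℝ is twice continuously differentiable. Let r : ℝ → ℝ be twice differentiable with r(θ) > 0 and r(θ) sin θ − r′(θ) cos θ ≠ 0 near θ₀. Then the Euler–Lagrange expression satisfies, at θ₀, (∂L/∂ρ)(θ, r(θ), r′(θ)) − d/dθ[(∂L/∂p)(θ, r(θ), r′(θ))] = r(θ)·(γ(Ω(θ)) + γ″(Ω(θ)))·κ(θ), where Ω(θ) := ω(θ, r(θ), r′(θ)) and κ(θ) := (2r′(θ)² − r(θ) r″(θ) + r(θ)²)/(r′(θ)² + r(θ)²)^{3/2}. -/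

import Mathlib

/-!
Writing `N + iD = (ρ - ip) e^{iθ}` for the numerator and denominator of the arctangent shows
that locally `ω = θ - arg (ρ + ip) + const`, hence `dω = dθ + (p dρ - ρ dp) / (ρ² + p²)`.
This gives `∂L/∂ρ = (γ' p + γ ρ) / √(ρ² + p²)` and `∂L/∂p = (γ p - γ' ρ) / √(ρ² + p²)`.
Along the lift `θ ↦ (θ, r, r')` of the curve one has `dΩ/dθ = κ √(r² + r'²)`, and in the
derivative of `∂L/∂p` the `γ'` terms cancel, leaving `∂L/∂ρ - r (γ + γ'') κ`.
-/

open Real Filter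

/-- The surface orientation angle of the outward normal to a polar curve R = r(θ),
as a function of θ, ρ and p = dr/dθ. -/
noncomputable def orientationAngle (θ ρ p : ℝ) : ℝ :=
  3 * π / 2 -
    Real.arctan ((ρ * Real.cos θ + p * Real.sin θ) / (ρ * Real.sin θ - p * Real.cos θ))

/-- The surface-energy Lagrangian L(θ, ρ, p) = γ(ω(θ,ρ,p)) √(ρ² + p²). -/
noncomputable def surfaceLagrangian (γ : ℝ → ℝ) (θ ρ p : ℝ) : ℝ :=
  γ (orientationAngle θ ρ p) * Real.sqrt (ρ ^ 2 + p ^ 2)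

theorem HasDerivAt.arctan_div {N D : ℝ → ℝ} {N' D' x : ℝ}
    (hN : HasDerivAt N N' x) (hD : HasDerivAt D D' x) (h : D x ≠ 0) :
    HasDerivAt (fun x => Real.arctan (N x / D x))
      ((N' * D x - N x * D') / (N x ^ 2 + D x ^ 2)) x := by
  refine ((hN.fun_div hD h).arctan).congr_deriv ?_
  field_simp
  ring

theorem rotate_sq_add_sq (θ ρ p : ℝ) :
    (ρ * cos θ + p * sin θ) ^ 2 + (ρ * sin θ - p * cos θ) ^ 2 = ρ ^ 2 + p ^ 2 := by
  linear_combination (ρ ^ 2 + p ^ 2) * sin_sq_add_cos_sq θ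

theorem sq_add_sq_pos_of_sub_ne_zero {θ ρ p : ℝ} (h : ρ * sin θ - p * cos θ ≠ 0) :
    0 < ρ ^ 2 + p ^ 2 := by
  rw [← rotate_sq_add_sq θ]
  positivity

theorem hasDerivAt_orientationAngle_comp {θ ρ p : ℝ → ℝ} {θ' ρ' p' t : ℝ}
    (hθ : HasDerivAt θ θ' t) (hρ : HasDerivAt ρ ρ' t) (hp : HasDerivAt p p' t)
    (h : ρ t * sin (θ t) - p t * cos (θ t) ≠ 0) :
    HasDerivAt (fun t => orientationAngle (θ t) (ρ t) (p t))
      (θ' + (p t * ρ' - ρ t * p') / (ρ t ^ 2 + p t ^ 2)) t := by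
  have hN : HasDerivAt (fun t => ρ t * cos (θ t) + p t * sin (θ t)) _ t :=
    (hρ.mul hθ.cos).add (hp.mul hθ.sin)
  have hD : HasDerivAt (fun t => ρ t * sin (θ t) - p t * cos (θ t)) _ t :=
    (hρ.mul hθ.sin).sub (hp.mul hθ.cos)
  refine ((hN.arctan_div hD h).const_sub (3 * π / 2)).congr_deriv ?_
  have hS := sq_add_sq_pos_of_sub_ne_zero h
  rw [rotate_sq_add_sq]
  field_simp
  linear_combination (θ' * (ρ t ^ 2 + p t ^ 2) + p t * ρ' - ρ t * p') * sin_sq_add_cos_sq (θ t)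

theorem hasDerivAt_surfaceLagrangian_comp {γ : ℝ → ℝ} {θ ρ p : ℝ → ℝ} {θ' ρ' p' t : ℝ}
    (hγ : DifferentiableAt ℝ γ (orientationAngle (θ t) (ρ t) (p t)))
    (hθ : HasDerivAt θ θ' t) (hρ : HasDerivAt ρ ρ' t) (hp : HasDerivAt p p' t)
    (h : ρ t * sin (θ t) - p t * cos (θ t) ≠ 0) :
    HasDerivAt (fun t => surfaceLagrangian γ (θ t) (ρ t) (p t))
      ((deriv γ (orientationAngle (θ t) (ρ t) (p t)) *
          (θ' * (ρ t ^ 2 + p t ^ 2) + p t * ρ' - ρ t * p') +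
        γ (orientationAngle (θ t) (ρ t) (p t)) * (ρ t * ρ' + p t * p')) /
        √(ρ t ^ 2 + p t ^ 2)) t := by
  have hS := sq_add_sq_pos_of_sub_ne_zero h
  have hsum : HasDerivAt (fun t => ρ t ^ 2 + p t ^ 2) (2 * (ρ t * ρ' + p t * p')) t := by
    refine ((hρ.pow 2).add (hp.pow 2)).congr_deriv ?_
    push_cast
    ring
  have hω := hasDerivAt_orientationAngle_comp hθ hρ hp h
  refine ((hγ.hasDerivAt.comp t hω).mul (hsum.sqrt hS.ne')).congr_deriv ?_
  have hs := sq_sqrt hS.le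
  simp only [Function.comp_apply]
  field_simp
  rw [hs]
  ring

theorem hasDerivAt_surfaceLagrangian_rho {γ : ℝ → ℝ} {θ ρ p : ℝ}
    (hγ : DifferentiableAt ℝ γ (orientationAngle θ ρ p)) (h : ρ * sin θ - p * cos θ ≠ 0) :
    HasDerivAt (fun ρ => surfaceLagrangian γ θ ρ p)
      ((deriv γ (orientationAngle θ ρ p) * p + γ (orientationAngle θ ρ p) * ρ) / √(ρ ^ 2 + p ^ 2))
      ρ := by
  refine (hasDerivAt_surfaceLagrangian_comp (θ := fun _ => θ) (ρ := fun x => x) (p := fun _ => p)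
    hγ (hasDerivAt_const ρ θ) (hasDerivAt_id' ρ) (hasDerivAt_const ρ p) h).congr_deriv ?_
  ring

theorem hasDerivAt_surfaceLagrangian_p {γ : ℝ → ℝ} {θ ρ p : ℝ}
    (hγ : DifferentiableAt ℝ γ (orientationAngle θ ρ p)) (h : ρ * sin θ - p * cos θ ≠ 0) :
    HasDerivAt (fun p => surfaceLagrangian γ θ ρ p)
      ((γ (orientationAngle θ ρ p) * p - deriv γ (orientationAngle θ ρ p) * ρ) / √(ρ ^ 2 + p ^ 2))
      p := by
  refine (hasDerivAt_surfaceLagrangian_comp (θ := fun _ => θ) (ρ := fun _ => ρ) (p := fun x => x)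
    hγ (hasDerivAt_const p θ) (hasDerivAt_const p ρ) (hasDerivAt_id' p) h).congr_deriv ?_
  ring

theorem rpow_three_halves {x : ℝ} (hx : 0 ≤ x) : x ^ (3 / 2 : ℝ) = x * √x := by
  rw [show (3 / 2 : ℝ) = 1 + 1 / 2 by norm_num, rpow_add' hx (by norm_num), rpow_one,
    sqrt_eq_rpow]

-- The function differentiated is `∂L/∂p` along the lift `t ↦ (t, ρ t, ρ' t)` of a curve.
theorem hasDerivAt_surfaceLagrangian_p_along {γ : ℝ → ℝ} {ρ p : ℝ → ℝ} {p' t : ℝ}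
    (hγ : DifferentiableAt ℝ γ (orientationAngle t (ρ t) (p t)))
    (hγ' : DifferentiableAt ℝ (deriv γ) (orientationAngle t (ρ t) (p t)))
    (hρ : HasDerivAt ρ (p t) t) (hp : HasDerivAt p p' t)
    (h : ρ t * sin t - p t * cos t ≠ 0) :
    HasDerivAt (fun t => (γ (orientationAngle t (ρ t) (p t)) * p t
        - deriv γ (orientationAngle t (ρ t) (p t)) * ρ t) / √(ρ t ^ 2 + p t ^ 2))
      ((deriv γ (orientationAngle t (ρ t) (p t)) * p t + γ (orientationAngle t (ρ t) (p t)) * ρ t)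
          / √(ρ t ^ 2 + p t ^ 2)
        - ρ t * (γ (orientationAngle t (ρ t) (p t))
            + deriv (deriv γ) (orientationAngle t (ρ t) (p t)))
          * ((2 * p t ^ 2 - ρ t * p' + ρ t ^ 2) / (p t ^ 2 + ρ t ^ 2) ^ (3 / 2 : ℝ))) t := by
  have hS := sq_add_sq_pos_of_sub_ne_zero h
  have hω := hasDerivAt_orientationAngle_comp (θ := fun t => t) (hasDerivAt_id' t) hρ hp h
  have hsum : HasDerivAt (fun t => ρ t ^ 2 + p t ^ 2) (2 * (ρ t * p t + p t * p')) t := by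
    refine ((hρ.pow 2).add (hp.pow 2)).congr_deriv ?_
    push_cast
    ring
  have hnum := ((hγ.hasDerivAt.comp t hω).mul hp).sub ((hγ'.hasDerivAt.comp t hω).mul hρ)
  refine (hnum.fun_div (hsum.sqrt hS.ne') (sqrt_pos.2 hS).ne').congr_deriv ?_
  rw [add_comm (p t ^ 2), rpow_three_halves hS.le]
  have hs := sq_sqrt hS.le
  simp only [Pi.sub_apply, Pi.mul_apply, Function.comp_apply]
  field_simp
  rw [hs]
  ring

theorem stmt10_general (γ : ℝ → ℝ) (hγ : ContDiff ℝ 2 γ)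
    (r : ℝ → ℝ) (hr : Differentiable ℝ r) (hr' : Differentiable ℝ (deriv r))
    (θ₀ : ℝ)
    (hD : ∀ᶠ θ in nhds θ₀, r θ * Real.sin θ - deriv r θ * Real.cos θ ≠ 0) :
    deriv (fun ρ => surfaceLagrangian γ θ₀ ρ (deriv r θ₀)) (r θ₀)
      - deriv (fun θ => deriv (fun p => surfaceLagrangian γ θ (r θ) p) (deriv r θ)) θ₀
    = r θ₀ *
        (γ (orientationAngle θ₀ (r θ₀) (deriv r θ₀)) +
          deriv (deriv γ) (orientationAngle θ₀ (r θ₀) (deriv r θ₀))) *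
        ((2 * deriv r θ₀ ^ 2 - r θ₀ * deriv (deriv r) θ₀ + r θ₀ ^ 2) /
          (deriv r θ₀ ^ 2 + r θ₀ ^ 2) ^ ((3 : ℝ) / 2)) := by
  have hγ₁ : Differentiable ℝ γ := hγ.differentiable two_ne_zero
  have hD₀ := hD.self_of_nhds
  have hmomentum : (fun θ => deriv (fun p => surfaceLagrangian γ θ (r θ) p) (deriv r θ))
      =ᶠ[nhds θ₀] fun θ => (γ (orientationAngle θ (r θ) (deriv r θ)) * deriv r θ
        - deriv γ (orientationAngle θ (r θ) (deriv r θ)) * r θ) / √(r θ ^ 2 + deriv r θ ^ 2) := by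
    filter_upwards [hD] with θ hθ using (hasDerivAt_surfaceLagrangian_p (hγ₁ _) hθ).deriv
  rw [(hasDerivAt_surfaceLagrangian_rho (hγ₁ _) hD₀).deriv, hmomentum.deriv_eq,
    (hasDerivAt_surfaceLagrangian_p_along (hγ₁ _) (hγ.differentiable_deriv_two _)
      (hr θ₀).hasDerivAt (hr' θ₀).hasDerivAt hD₀).deriv]
  ring

/-- the Euler–Lagrange expression of the surface energy reduces to
Herring's form: ∂L/∂ρ − d/dθ(∂L/∂p) = r (γ(Ω) + γ″(Ω)) κ, where
Ω(θ) = ω(θ, r(θ), r′(θ)) and κ = (2r′² − r r″ + r²)/(r′² + r²)^{3/2}. -/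
theorem stmt10 (γ : ℝ → ℝ) (hγ : ContDiff ℝ 2 γ)
    (r : ℝ → ℝ) (hr : Differentiable ℝ r) (hr' : Differentiable ℝ (deriv r))
    (θ₀ : ℝ) (hpos : ∀ᶠ θ in nhds θ₀, 0 < r θ)
    (hD : ∀ᶠ θ in nhds θ₀, r θ * Real.sin θ - deriv r θ * Real.cos θ ≠ 0) :
    deriv (fun ρ => surfaceLagrangian γ θ₀ ρ (deriv r θ₀)) (r θ₀)
      - deriv (fun θ => deriv (fun p => surfaceLagrangian γ θ (r θ) p) (deriv r θ)) θ₀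
    = r θ₀ *
        (γ (orientationAngle θ₀ (r θ₀) (deriv r θ₀)) +
          deriv (deriv γ) (orientationAngle θ₀ (r θ₀) (deriv r θ₀))) *
        ((2 * deriv r θ₀ ^ 2 - r θ₀ * deriv (deriv r) θ₀ + r θ₀ ^ 2) /
          (deriv r θ₀ ^ 2 + r θ₀ ^ 2) ^ ((3 : ℝ) / 2)) :=
  stmt10_general γ hγ r hr hr' θ₀ hD
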